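/- Let D ≥ 1, let z = (z₁,…,z_D) be a random vector whose coordinates are independent standard normal random variables (i.e., z has the D-fold product of the standard Gaussian measure on ℝ as its law), let γ > 0, and let g ∈ ℝ^D. Define d(z) = sign(g + γz) componentwise. Then E[⟨d(z), g⟩] = Σ_{i=1}^{D} g_i·(2Φ(g_i/γ) − 1) = Σ_{i=1}^{D} |g_i|·(2Φ(|g_i|/γ) − 1) ≥ 0, and E[⟨d(z), g⟩] = 0 if and only if g = 0. -/

import Mathlib

open MeasureTheory ProbabilityTheory

/-- The cumulative distribution function of the standard normal distribution. -/
noncomputable def Phi (x : ℝ) : ℝ := ((gaussianReal 0 1) (Set.Iic x)).toReal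

/-!
Linearity of expectation and the product structure reduce everything to one coordinate, where
`E[sign (a + γ t)] = P(t > -a/γ) - P(t < -a/γ) = 2 Φ(a/γ) - 1` by the symmetry of the Gaussian.
Since the Gaussian charges every interval, `Φ` is strictly increasing with `Φ 0 = 1/2`, so
`2 Φ(x) - 1` has the sign of `x` and each summand `gᵢ (2 Φ(gᵢ/γ) - 1)` is positive unless
`gᵢ = 0`.
-/

open Set

namespace Real

lemma sign_sub_eq_indicator_sub (c t : ℝ) :
    sign (t - c) = (Ioi c).indicator 1 t - (Iio c).indicator 1 t := by
  rcases lt_trichotomy t c with h | rfl | h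
  · simp [sign_of_neg (sub_neg.2 h), h, h.not_gt]
  · simp
  · simp [sign_of_pos (sub_pos.2 h), h, h.not_gt]

lemma sign_mul_of_pos {γ : ℝ} (hγ : 0 < γ) (x : ℝ) : sign (γ * x) = sign x := by
  rcases lt_trichotomy x 0 with h | rfl | h
  · rw [sign_of_neg h, sign_of_neg (mul_neg_of_pos_of_neg hγ h)]
  · simp
  · rw [sign_of_pos h, sign_of_pos (mul_pos hγ h)]

lemma measurable_sign : Measurable sign := by
  have : sign = fun t => (Ioi 0).indicator 1 t - (Iio 0).indicator 1 t := by
    funext t; simpa using sign_sub_eq_indicator_sub 0 t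
  rw [this]
  exact (measurable_const.indicator measurableSet_Ioi).sub
    (measurable_const.indicator measurableSet_Iio)

end Real

lemma integrable_sign_comp {α : Type*} [MeasurableSpace α] {μ : Measure α} [IsFiniteMeasure μ]
    {f : α → ℝ} (hf : Measurable f) :
    Integrable (fun x => Real.sign (f x)) μ := by
  refine Integrable.of_bound (C := 1) (Real.measurable_sign.comp hf).aestronglyMeasurable
    (ae_of_all _ fun x => ?_)
  rcases Real.sign_apply_eq (f x) with h | h | h <;> simp [h]

lemma integral_sign_sub {μ : Measure ℝ} [IsProbabilityMeasure μ] [NullSingletonClass μ]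
    (c : ℝ) :
    ∫ t, Real.sign (t - c) ∂μ = 1 - 2 * cdf μ c := by
  simp_rw [Real.sign_sub_eq_indicator_sub c]
  rw [integral_sub ((integrable_const 1).indicator measurableSet_Ioi)
      ((integrable_const 1).indicator measurableSet_Iio),
    integral_indicator_one measurableSet_Ioi, integral_indicator_one measurableSet_Iio,
    ← compl_Iic, probReal_compl_eq_one_sub measurableSet_Iic, measureReal_congr Iio_ae_eq_Iic,
    cdf_eq_real]
  ring

lemma Phi_eq_cdf : Phi = cdf (gaussianReal 0 1) := by
  funext x
  rw [cdf_eq_real]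
  rfl

instance instNullSingletonClassGaussianRealZeroOne : NullSingletonClass (gaussianReal 0 1) :=
  nullSingletonClass_gaussianReal one_ne_zero

lemma Phi_neg (x : ℝ) : Phi (-x) = 1 - Phi x := by
  have hsymm : (gaussianReal 0 1).real (Iic (-x)) = (gaussianReal 0 1).real (Ici x) := by
    conv_lhs => rw [← neg_zero, ← gaussianReal_map_neg]
    rw [map_measureReal_apply measurable_neg measurableSet_Iic]
    congr 1
    ext t
    simp
  rw [Phi_eq_cdf, cdf_eq_real, cdf_eq_real, hsymm, ← measureReal_congr Ioi_ae_eq_Ici,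
    ← compl_Iic, probReal_compl_eq_one_sub measurableSet_Iic]

lemma Phi_zero : Phi 0 = 1 / 2 := by
  linarith [neg_zero (G := ℝ) ▸ Phi_neg 0]

lemma Phi_strictMono : StrictMono Phi := by
  intro x y hxy
  have hpos : gaussianReal 0 1 (Ioc x y) ≠ 0 := fun h => hxy.not_ge <| by
    simpa [Real.volume_Ioc] using gaussianReal_absolutelyContinuous' 0 one_ne_zero h
  rw [← measure_cdf (gaussianReal 0 1), StieltjesFunction.measure_Ioc, ← Phi_eq_cdf] at hpos
  simpa using hpos

lemma integral_sign_add_mul_gaussianReal {γ : ℝ} (hγ : 0 < γ) (a : ℝ) :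
    ∫ t, Real.sign (a + γ * t) ∂gaussianReal 0 1 = 2 * Phi (a / γ) - 1 := by
  have hrescale : ∀ t, a + γ * t = γ * (t - -(a / γ)) := fun t => by field_simp; ring
  simp_rw [hrescale, Real.sign_mul_of_pos hγ, integral_sign_sub, ← Phi_eq_cdf, Phi_neg]
  ring

lemma mul_two_mul_Phi_div_sub_one_eq_abs (a γ : ℝ) :
    a * (2 * Phi (a / γ) - 1) = |a| * (2 * Phi (|a| / γ) - 1) := by
  rcases le_or_gt 0 a with ha | ha
  · rw [abs_of_nonneg ha]
  · rw [abs_of_neg ha, neg_div, Phi_neg]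
    ring

lemma mul_two_mul_Phi_div_sub_one_nonneg {γ : ℝ} (hγ : 0 ≤ γ) (a : ℝ) :
    0 ≤ a * (2 * Phi (a / γ) - 1) := by
  rw [mul_two_mul_Phi_div_sub_one_eq_abs]
  have : Phi 0 ≤ Phi (|a| / γ) := Phi_strictMono.monotone (by positivity)
  rw [Phi_zero] at this
  exact mul_nonneg (abs_nonneg a) (by linarith)

lemma mul_two_mul_Phi_div_sub_one_eq_zero_iff {γ : ℝ} (hγ : 0 < γ) (a : ℝ) :
    a * (2 * Phi (a / γ) - 1) = 0 ↔ a = 0 := by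
  refine ⟨fun h => ?_, fun ha => by simp [ha]⟩
  by_contra ha
  rw [mul_two_mul_Phi_div_sub_one_eq_abs] at h
  have : Phi 0 < Phi (|a| / γ) := Phi_strictMono (by positivity)
  rw [Phi_zero] at this
  have : 0 < |a| * (2 * Phi (|a| / γ) - 1) := mul_pos (abs_pos.2 ha) (by linarith)
  linarith

theorem stmt4_general (D : ℕ) (γ : ℝ) (hγ : 0 < γ) (g : Fin D → ℝ) :
    (∫ z : Fin D → ℝ, (∑ i, Real.sign (g i + γ * z i) * g i)
        ∂(Measure.pi fun _ => gaussianReal 0 1)) =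
      ∑ i, g i * (2 * Phi (g i / γ) - 1) ∧
    (∑ i, g i * (2 * Phi (g i / γ) - 1)) = ∑ i, |g i| * (2 * Phi (|g i| / γ) - 1) ∧
    0 ≤ ∑ i, g i * (2 * Phi (g i / γ) - 1) ∧
    ((∫ z : Fin D → ℝ, (∑ i, Real.sign (g i + γ * z i) * g i)
        ∂(Measure.pi fun _ => gaussianReal 0 1)) = 0 ↔ g = 0) := by
  have hexpect : (∫ z : Fin D → ℝ, (∑ i, Real.sign (g i + γ * z i) * g i)
      ∂(Measure.pi fun _ => gaussianReal 0 1)) = ∑ i, g i * (2 * Phi (g i / γ) - 1) := by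
    rw [integral_finsetSum _ fun i _ => (integrable_sign_comp (by fun_prop)).mul_const (g i)]
    refine Finset.sum_congr rfl fun i _ => ?_
    rw [integral_mul_const, integral_comp_eval (μ := fun _ => gaussianReal 0 1)
      (f := fun t => Real.sign (g i + γ * t))
      (Real.measurable_sign.comp (by fun_prop)).aestronglyMeasurable,
      integral_sign_add_mul_gaussianReal hγ, mul_comm]
  have hnonneg := fun i (_ : i ∈ Finset.univ) => mul_two_mul_Phi_div_sub_one_nonneg hγ.le (g i)
  refine ⟨hexpect, Finset.sum_congr rfl fun i _ => mul_two_mul_Phi_div_sub_one_eq_abs (g i) γ,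
    Finset.sum_nonneg hnonneg, ?_⟩
  simp [hexpect, Finset.sum_eq_zero_iff_of_nonneg hnonneg,
    mul_two_mul_Phi_div_sub_one_eq_zero_iff hγ, funext_iff]

/-- Ascent-direction guarantee: for `z` with i.i.d. standard normal
coordinates, `γ > 0` and `g ∈ ℝ^D`, with `d(z) = sign(g + γz)` componentwise,
`E[⟨d(z), g⟩] = Σᵢ gᵢ (2Φ(gᵢ/γ) − 1) = Σᵢ |gᵢ| (2Φ(|gᵢ|/γ) − 1) ≥ 0`,
with `E[⟨d(z), g⟩] = 0` iff `g = 0`. -/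
theorem stmt4 (D : ℕ) (hD : 1 ≤ D) (γ : ℝ) (hγ : 0 < γ) (g : Fin D → ℝ) :
    (∫ z : Fin D → ℝ, (∑ i, Real.sign (g i + γ * z i) * g i)
        ∂(Measure.pi fun _ => gaussianReal 0 1)) =
      ∑ i, g i * (2 * Phi (g i / γ) - 1) ∧
    (∑ i, g i * (2 * Phi (g i / γ) - 1)) = ∑ i, |g i| * (2 * Phi (|g i| / γ) - 1) ∧
    0 ≤ ∑ i, g i * (2 * Phi (g i / γ) - 1) ∧
    ((∫ z : Fin D → ℝ, (∑ i, Real.sign (g i + γ * z i) * g i)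
        ∂(Measure.pi fun _ => gaussianReal 0 1)) = 0 ↔ g = 0) :=
  stmt4_general D γ hγ g
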